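/- Let B ⊆ ((ℕ×ℕ) → ℕ) × ((ℕ×ℕ) → ℝ) and let A = {x : {y : (x,y) ∈ B} ∈ ⅁ℝ_{ω²}}. Let 𝔾_B be the game of length ω³ on ℕ in which: the moves at the positions (0,m,n) form an element x ∈ (ℕ×ℕ) → ℕ; for each i ≥ 0 and m ∈ ℕ, within the block of positions (1+i, m, n) (n ∈ ℕ), the real y(i,m) ∈ ℝ is defined as the sequence of moves made at the positions with n even if m is even (so the digits are supplied by Player I) and at the positions with n odd if m is odd (so the digits are supplied by Player II), the remaining moves of that block being ignored; Player I wins a run of 𝔾_B iff (x, y) ∈ B, where y ∈ (ℕ×ℕ) → ℝ. Then: (i) if B is open in the product topology, the payoff of 𝔾_B is an open subset of (ℕ×ℕ×ℕ) → ℕ; and (ii) if a player has a winning strategy Σ in 𝔾_B, then the restriction of Σ to the positions (0,m,n) is a winning strategy for that same player in the game of length ω² on ℕ with payoff A. In particular, if 𝔾_B is determined then the game of length ω² on ℕ with payoff A is determined. -/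

import Mathlib

noncomputable section

/-- The Baire space `ℕ → ℕ`, denoted ℝ in the paper. -/
abbrev Baire : Type := ℕ → ℕ

/-- The finite sequence `(x 0, …, x (m-1))`. -/
def resSeq {α : Type*} (x : ℕ → α) (m : ℕ) : List α := List.ofFn fun i : Fin m => x i

/-- `σ` is a winning strategy for Player I in the length-ω game on `X` with payoff `A`. -/
def WinStratI {X : Type*} (A : Set (ℕ → X)) (σ : List X → X) : Prop :=
  ∀ x : ℕ → X, (∀ n, x (2 * n) = σ (resSeq x (2 * n))) → x ∈ A

/-- `τ` is a winning strategy for Player II in the length-ω game on `X` with payoff `A`. -/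
def WinStratII {X : Type*} (A : Set (ℕ → X)) (τ : List X → X) : Prop :=
  ∀ x : ℕ → X, (∀ n, x (2 * n + 1) = τ (resSeq x (2 * n + 1))) → x ∉ A

/-- The length-ω game on `X` with payoff `A` is determined. -/
def DeterminedOmega {X : Type*} (A : Set (ℕ → X)) : Prop :=
  (∃ σ, WinStratI A σ) ∨ (∃ τ, WinStratII A τ)

/-- Lexicographic order on ℕ × ℕ. -/
def lex2 (p q : ℕ × ℕ) : Prop := p.1 < q.1 ∨ (p.1 = q.1 ∧ p.2 < q.2)

/-- A strategy in a game of length ω²: it assigns a move to each position, as a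
function of the partial play on the lexicographic initial segment below the position. -/
abbrev Strat2 (X : Type*) := ∀ p : ℕ × ℕ, ({q : ℕ × ℕ // lex2 q p} → X) → X

/-- `σ` is winning for Player I (who moves at `(m,n)` for `n` even) in the game of
length ω² on `X` with payoff `A`. -/
def WinStrat2I {X : Type*} (A : Set ((ℕ × ℕ) → X)) (σ : Strat2 X) : Prop :=
  ∀ x : (ℕ × ℕ) → X, (∀ p : ℕ × ℕ, Even p.2 → x p = σ p fun q => x q.1) → x ∈ A

/-- `τ` is winning for Player II (who moves at `(m,n)` for `n` odd) in the game of
length ω² on `X` with payoff `A`. -/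
def WinStrat2II {X : Type*} (A : Set ((ℕ × ℕ) → X)) (τ : Strat2 X) : Prop :=
  ∀ x : (ℕ × ℕ) → X, (∀ p : ℕ × ℕ, Odd p.2 → x p = τ p fun q => x q.1) → x ∉ A

/-- The game of length ω² on `X` with payoff `A` is determined. -/
def Determined2 {X : Type*} (A : Set ((ℕ × ℕ) → X)) : Prop :=
  (∃ σ, WinStrat2I A σ) ∨ (∃ τ, WinStrat2II A τ)

/-- Lexicographic order on ℕ × ℕ × ℕ. -/
def lex3 (p q : ℕ × ℕ × ℕ) : Prop := p.1 < q.1 ∨ (p.1 = q.1 ∧ lex2 p.2 q.2)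

/-- A strategy in a game of length ω³. -/
abbrev Strat3 (X : Type*) := ∀ p : ℕ × ℕ × ℕ, ({q : ℕ × ℕ × ℕ // lex3 q p} → X) → X

/-- `σ` is winning for Player I (who moves at `(k,m,n)` for `n` even) in the game of
length ω³ on `X` with payoff `A`. -/
def WinStrat3I {X : Type*} (A : Set ((ℕ × ℕ × ℕ) → X)) (σ : Strat3 X) : Prop :=
  ∀ x : (ℕ × ℕ × ℕ) → X, (∀ p : ℕ × ℕ × ℕ, Even p.2.2 → x p = σ p fun q => x q.1) → x ∈ A

/-- `τ` is winning for Player II in the game of length ω³ on `X` with payoff `A`. -/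
def WinStrat3II {X : Type*} (A : Set ((ℕ × ℕ × ℕ) → X)) (τ : Strat3 X) : Prop :=
  ∀ x : (ℕ × ℕ × ℕ) → X, (∀ p : ℕ × ℕ × ℕ, Odd p.2.2 → x p = τ p fun q => x q.1) → x ∉ A

/-- The game of length ω³ on `X` with payoff `A` is determined. -/
def Determined3 {X : Type*} (A : Set ((ℕ × ℕ × ℕ) → X)) : Prop :=
  (∃ σ, WinStrat3I A σ) ∨ (∃ τ, WinStrat3II A τ)

/-- `A ∈ ⅁ℝ_{ω²}`: Player I has a winning strategy in the game of length ω² on ℝ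
(the Baire space) with payoff `A`. -/
def GameR2I (A : Set ((ℕ × ℕ) → Baire)) : Prop := ∃ σ : Strat2 Baire, WinStrat2I A σ


/-- The sequence `x ∈ (ℕ×ℕ) → ℕ` formed by the moves at positions `(0,m,n)`. -/
def xPart (w : (ℕ × ℕ × ℕ) → ℕ) : (ℕ × ℕ) → ℕ := fun q => w (0, q.1, q.2)

/-- The real `y(i,m)` extracted from the block of positions `(1+i, m, n)`: its digits
are the moves with `n` even if `m` is even (supplied by Player I) and the moves with
`n` odd if `m` is odd (supplied by Player II). -/
def yPart (w : (ℕ × ℕ × ℕ) → ℕ) : (ℕ × ℕ) → Baire := fun q =>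
  if Even q.2 then (fun n => w (1 + q.1, q.2, 2 * n)) else (fun n => w (1 + q.1, q.2, 2 * n + 1))

/-- The payoff of the game `𝔾_B`: Player I wins the run `w` iff `(x, y) ∈ B`. -/
def GBpayoff (B : Set (((ℕ × ℕ) → ℕ) × ((ℕ × ℕ) → Baire))) : Set ((ℕ × ℕ × ℕ) → ℕ) :=
  {w | (xPart w, yPart w) ∈ B}

/-- `A = {x : {y : (x,y) ∈ B} ∈ ⅁ℝ_{ω²}}`. -/
def AofB (B : Set (((ℕ × ℕ) → ℕ) × ((ℕ × ℕ) → Baire))) : Set ((ℕ × ℕ) → ℕ) :=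
  {x | GameR2I {y | (x, y) ∈ B}}

/-- The restriction of a length-ω³ strategy to the positions `(0,m,n)`, viewed as a
length-ω² strategy. -/
def restrict0 {X : Type*} (S : Strat3 X) : Strat2 X := fun q f =>
  S (0, q.1, q.2) fun r => f ⟨r.1.2, (r.2.resolve_left (Nat.not_lt_zero _)).2⟩
/-! Each player transfers a winning strategy in `𝔾_B` to the game on reals by simulating a run of
`𝔾_B` whose level `0` is `x` and whose opponent moves in the block `(1+i, m)` are the digits of
the opponent's real `y (i, m)`. Player I's real `y (i, m)`, `m` even, is read off the simulated
run at the positions `(1+i, m, 2n)`; it depends only on the reals played before `(i, m)` because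
Player II's simulated moves in the blocks with `m` even are `0` rather than digits of `y`. -/

theorem lex3_wellFounded : WellFounded lex3 := by
  refine Subrelation.wf (fun {p q} hpq => ?_)
    (WellFounded.prod_lex wellFounded_lt (WellFounded.prod_lex wellFounded_lt wellFounded_lt))
  obtain ⟨a, b, c⟩ := p
  obtain ⟨d, e, f⟩ := q
  rcases hpq with h | ⟨rfl, h | ⟨rfl, h⟩⟩
  · exact Prod.Lex.left _ _ h
  · exact Prod.Lex.right _ (Prod.Lex.left _ _ h)
  · exact Prod.Lex.right _ (Prod.Lex.right _ h)

theorem lex3_trans {p q r : ℕ × ℕ × ℕ} (hpq : lex3 p q) (hqr : lex3 q r) : lex3 p r := by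
  simp only [lex3, lex2] at *
  omega

section Run

variable {X : Type*}

/-- The run in which every move, of either player, is made by `F`. -/
def run3 (F : Strat3 X) : (ℕ × ℕ × ℕ) → X :=
  lex3_wellFounded.fix fun p rec => F p fun q => rec q.1 q.2

theorem run3_eq (F : Strat3 X) (p : ℕ × ℕ × ℕ) : run3 F p = F p fun q => run3 F q.1 :=
  lex3_wellFounded.fix_eq _ p

theorem run3_congr {F G : Strat3 X} {p : ℕ × ℕ × ℕ}
    (hFG : ∀ q, lex3 q p ∨ q = p → F q = G q) : run3 F p = run3 G p := by
  induction p using lex3_wellFounded.induction with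
  | _ p ih =>
    rw [run3_eq, run3_eq, hFG p (Or.inr rfl)]
    congr 1
    funext q
    exact ih q.1 q.2 fun r hr => hFG r (Or.inl (hr.elim (lex3_trans · q.2) (· ▸ q.2)))

def extendRun (x : (ℕ × ℕ) → X) (σ τ : Strat3 X) : (ℕ × ℕ × ℕ) → X :=
  run3 fun p => if p.1 = 0 then fun _ => x p.2 else if Even p.2.2 then σ p else τ p

variable (x : (ℕ × ℕ) → X) (σ τ : Strat3 X)

theorem extendRun_zero (m n : ℕ) : extendRun x σ τ (0, m, n) = x (m, n) := by
  rw [extendRun, run3_eq, if_pos rfl]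

theorem extendRun_of_even {p : ℕ × ℕ × ℕ} (hp : p.1 ≠ 0) (hn : Even p.2.2) :
    extendRun x σ τ p = σ p fun q => extendRun x σ τ q.1 := by
  rw [extendRun, run3_eq, if_neg hp, if_pos hn]

theorem extendRun_of_not_even {p : ℕ × ℕ × ℕ} (hp : p.1 ≠ 0) (hn : ¬ Even p.2.2) :
    extendRun x σ τ p = τ p fun q => extendRun x σ τ q.1 := by
  rw [extendRun, run3_eq, if_neg hp, if_neg hn]

theorem extendRun_congr_right {τ' : Strat3 X} {p : ℕ × ℕ × ℕ}
    (hττ' : ∀ q, lex3 q p ∨ q = p → q.1 ≠ 0 → ¬ Even q.2.2 → τ q = τ' q) :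
    extendRun x σ τ p = extendRun x σ τ' p := by
  refine run3_congr fun q hq => ?_
  by_cases h0 : q.1 = 0
  · simp only [if_pos h0]
  · by_cases hn : Even q.2.2
    · simp only [if_neg h0, if_pos hn]
    · simp only [if_neg h0, if_neg hn, hττ' q hq h0 hn]

theorem restrict0_apply (S : Strat3 X) {w : (ℕ × ℕ × ℕ) → X} (hw : ∀ q, w (0, q.1, q.2) = x q)
    (q : ℕ × ℕ) : restrict0 S q (fun r => x r.1) = S (0, q.1, q.2) fun r => w r.1 := by
  refine congrArg (S (0, q.1, q.2)) (funext fun r => ?_)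
  obtain ⟨⟨k, m, n⟩, hr⟩ := r
  obtain rfl : k = 0 := by simp only [lex3] at hr; omega
  exact (hw (m, n)).symm

theorem extendRun_consistent_even (hx : ∀ q : ℕ × ℕ, Even q.2 → x q = restrict0 σ q fun r => x r.1)
    (p : ℕ × ℕ × ℕ) (hp : Even p.2.2) : extendRun x σ τ p = σ p fun q => extendRun x σ τ q.1 := by
  obtain ⟨k, m, n⟩ := p
  rcases Nat.eq_zero_or_pos k with rfl | hk
  · rw [extendRun_zero, hx (m, n) hp]
    exact restrict0_apply x σ (fun q => extendRun_zero x σ τ q.1 q.2) (m, n)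
  · exact extendRun_of_even x σ τ hk.ne' hp

theorem extendRun_consistent_odd (hx : ∀ q : ℕ × ℕ, Odd q.2 → x q = restrict0 τ q fun r => x r.1)
    (p : ℕ × ℕ × ℕ) (hp : Odd p.2.2) : extendRun x σ τ p = τ p fun q => extendRun x σ τ q.1 := by
  obtain ⟨k, m, n⟩ := p
  rcases Nat.eq_zero_or_pos k with rfl | hk
  · rw [extendRun_zero, hx (m, n) hp]
    exact restrict0_apply x τ (fun q => extendRun_zero x σ τ q.1 q.2) (m, n)
  · exact extendRun_of_not_even x σ τ hk.ne' (Nat.not_even_iff_odd.mpr hp)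

end Run

theorem xPart_extendRun (x : (ℕ × ℕ) → ℕ) (σ τ : Strat3 ℕ) : xPart (extendRun x σ τ) = x :=
  funext fun q => extendRun_zero x σ τ q.1 q.2

theorem continuous_yPart : Continuous yPart :=
  continuous_pi fun _ => continuous_if_const _ (fun _ => continuous_pi fun _ => continuous_apply _)
    (fun _ => continuous_pi fun _ => continuous_apply _)

theorem isOpen_GBpayoff {B : Set (((ℕ × ℕ) → ℕ) × ((ℕ × ℕ) → Baire))} (hB : IsOpen B) :
    IsOpen (GBpayoff B) :=
  hB.preimage ((continuous_pi fun _ => continuous_apply _).prodMk continuous_yPart)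

section PlayerI

def digitsOfReals (y : (ℕ × ℕ) → Baire) : Strat3 ℕ := fun p _ =>
  if Even p.2.1 then 0 else y (p.1 - 1, p.2.1) (p.2.2 / 2)

open Classical in
/-- The reals not yet played are replaced by `0`; `S` does not see them before `(1+i, m, 2n)`. -/
def realStratI (x : (ℕ × ℕ) → ℕ) (S : Strat3 ℕ) : Strat2 Baire := fun q f n =>
  extendRun x S (digitsOfReals fun r => if h : lex2 r q then f ⟨r, h⟩ else 0) (1 + q.1, q.2, 2 * n)

variable {x : (ℕ × ℕ) → ℕ} {S : Strat3 ℕ}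

theorem yPart_extendRun_digitsOfReals {y : (ℕ × ℕ) → Baire}
    (hy : ∀ q : ℕ × ℕ, Even q.2 → y q = realStratI x S q fun r => y r.1) :
    yPart (extendRun x S (digitsOfReals y)) = y := by
  funext ⟨i, m⟩ n
  by_cases hm : Even m
  · simp only [yPart, if_pos hm, hy (i, m) hm, realStratI]
    refine extendRun_congr_right x S _ fun ⟨k, m', n'⟩ hle hk _ => ?_
    funext _
    simp only [digitsOfReals]
    split_ifs with hm' hlt
    · rfl
    · rfl
    · refine absurd ?_ hlt
      simp only [lex2, lex3, Prod.mk.injEq, Nat.even_iff] at hle hk hm hm' ⊢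
      omega
  · have h2 : ¬ Even (2 * n + 1) := by simp
    simp only [yPart, if_neg hm]
    rw [extendRun_of_not_even x S _ (by omega) h2]
    simp only [digitsOfReals, if_neg hm]
    congr 2 <;> omega

theorem winStrat2I_restrict0 {B : Set (((ℕ × ℕ) → ℕ) × ((ℕ × ℕ) → Baire))}
    (hS : WinStrat3I (GBpayoff B) S) : WinStrat2I (AofB B) (restrict0 S) := by
  intro x hx
  refine ⟨realStratI x S, fun y hy => ?_⟩
  have hmem : (xPart _, yPart _) ∈ B := hS _ (extendRun_consistent_even x S (digitsOfReals y) hx)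
  rwa [xPart_extendRun, yPart_extendRun_digitsOfReals hy] at hmem

end PlayerI

section PlayerII

open Classical in
/-- At `p = (1+i, m, n)`: digit `n / 2` of the real `σ` plays at `(i, m)` against the reals of
the earlier blocks. Level `0` is never consulted. -/
def digitsOfRealStrat (σ : Strat2 Baire) : Strat3 ℕ := fun p h =>
  σ (p.1 - 1, p.2.1) (fun r => yPart (fun q => if hq : lex3 q p then h ⟨q, hq⟩ else 0) r.1)
    (p.2.2 / 2)

open Classical in
theorem yPart_extendByZero (w : (ℕ × ℕ × ℕ) → ℕ) {i m n : ℕ} {r : ℕ × ℕ} (hr : lex2 r (i, m)) :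
    yPart (fun q => if lex3 q (i + 1, m, n) then w q else 0) r = yPart w r := by
  simp only [lex2] at hr
  unfold yPart
  split_ifs <;> exact funext fun k => if_pos (by simp only [lex3, lex2]; omega)

variable {x : (ℕ × ℕ) → ℕ} {S : Strat3 ℕ} {σ : Strat2 Baire}

theorem yPart_extendRun_digitsOfRealStrat (q : ℕ × ℕ) (hq : Even q.2) :
    yPart (extendRun x (digitsOfRealStrat σ) S) q =
      σ q fun r => yPart (extendRun x (digitsOfRealStrat σ) S) r.1 := by
  obtain ⟨i, m⟩ := q
  funext n
  simp only [yPart, if_pos hq]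
  -- with `i + 1`, the position `(i + 1 - 1, m)` at which `σ` is consulted is `(i, m)` by `rfl`
  rw [Nat.add_comm 1 i, extendRun_of_even x _ S i.succ_ne_zero (even_two_mul n)]
  simp only [digitsOfRealStrat, Nat.mul_div_cancel_left n two_pos]
  exact congrFun (congrArg (σ (i, m)) (funext fun r => yPart_extendByZero _ r.2)) n

theorem winStrat2II_restrict0 {B : Set (((ℕ × ℕ) → ℕ) × ((ℕ × ℕ) → Baire))}
    (hS : WinStrat3II (GBpayoff B) S) : WinStrat2II (AofB B) (restrict0 S) := by
  rintro x hx ⟨σ, hσ⟩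
  have hmem : (x, yPart (extendRun x (digitsOfRealStrat σ) S)) ∈ B :=
    hσ _ yPart_extendRun_digitsOfRealStrat
  refine hS (extendRun x (digitsOfRealStrat σ) S) (extendRun_consistent_odd x _ S hx) ?_
  change (xPart _, yPart _) ∈ B
  rwa [xPart_extendRun]

end PlayerII

/-- (i) If `B` is open then the payoff of `𝔾_B` is open; (ii) if a player has a winning
strategy `S` in `𝔾_B`, then the restriction of `S` to the positions `(0,m,n)` is a
winning strategy for that same player in the game of length ω² on ℕ with payoff
`A = {x : {y : (x,y) ∈ B} ∈ ⅁ℝ_{ω²}}`; in particular, if `𝔾_B` is determined then so is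
the game of length ω² on ℕ with payoff `A`. -/
theorem auxiliary_game_GB (B : Set (((ℕ × ℕ) → ℕ) × ((ℕ × ℕ) → Baire))) :
    (IsOpen B → IsOpen (GBpayoff B)) ∧
    (∀ S : Strat3 ℕ, WinStrat3I (GBpayoff B) S → WinStrat2I (AofB B) (restrict0 S)) ∧
    (∀ S : Strat3 ℕ, WinStrat3II (GBpayoff B) S → WinStrat2II (AofB B) (restrict0 S)) ∧
    (Determined3 (GBpayoff B) → Determined2 (AofB B)) := by
  refine ⟨isOpen_GBpayoff, fun _ => winStrat2I_restrict0, fun _ => winStrat2II_restrict0, ?_⟩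
  rintro (⟨S, hS⟩ | ⟨S, hS⟩)
  · exact Or.inl ⟨_, winStrat2I_restrict0 hS⟩
  · exact Or.inr ⟨_, winStrat2II_restrict0 hS⟩

end
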